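/- The odd writhe polynomial f_K(t) = Σ_{c odd} w(c) t^{N(c)} is invariant under the Gauss-diagram Reidemeister move Ω1 (adding or removing an isolated chord that interlinks no other chord). -/

import Mathlib

open Finset LaurentPolynomial

/-- A signed, oriented chord diagram (combinatorial Gauss diagram) with `n` chords:
the `2*n` chord endpoints on the circle are the elements of `Fin (2*n)` in (positive)
cyclic order; chord `i` has over endpoint `c⁺ = ep (i, true)`, under endpoint
`c⁻ = ep (i, false)` and a sign (writhe) `sign i ∈ {1, -1}`. -/
structure ChordDiagram (n : ℕ) where
  ep : Fin n × Bool ≃ Fin (2 * n)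
  sign : Fin n → ℤ
  sign_unit : ∀ i, sign i = 1 ∨ sign i = -1

namespace ChordDiagram

variable {n : ℕ}

/-- the over endpoint `c⁺` of a chord -/
def overEnd (D : ChordDiagram n) (i : Fin n) : Fin (2 * n) := D.ep (i, true)

/-- the under endpoint `c⁻` of a chord -/
def under (D : ChordDiagram n) (i : Fin n) : Fin (2 * n) := D.ep (i, false)

/-- the number of steps from `b` to `x`, travelling in the positive direction
around the circle -/
def relpos (b x : Fin (2 * n)) : ℕ := (x.val + 2 * n - b.val) % (2 * n)

/-- `x` lies strictly between the endpoints of chord `i`, on the side swept out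
going from `c⁺` to `c⁻` in the positive direction -/
def StrictlyBetween (D : ChordDiagram n) (i : Fin n) (x : Fin (2 * n)) : Prop :=
  0 < relpos (D.overEnd i) x ∧ relpos (D.overEnd i) x < relpos (D.overEnd i) (D.under i)

instance (D : ChordDiagram n) (i : Fin n) (x : Fin (2 * n)) :
    Decidable (D.StrictlyBetween i x) := inferInstanceAs (Decidable (_ ∧ _))

/-- two distinct chords interlink if their endpoints alternate around the circle,
i.e. exactly one endpoint of `j` lies strictly between the endpoints of `i` -/
def Interlinks (D : ChordDiagram n) (i j : Fin n) : Prop :=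
  i ≠ j ∧ Xor (D.StrictlyBetween i (D.overEnd j)) (D.StrictlyBetween i (D.under j))

instance (D : ChordDiagram n) (i j : Fin n) : Decidable (D.Interlinks i j) :=
  inferInstanceAs (Decidable (_ ∧ _))

/-- the number of chords interlinking chord `i` -/
def interlinkCount (D : ChordDiagram n) (i : Fin n) : ℕ :=
  (univ.filter fun j => D.Interlinks i j).card

/-- the number of chord endpoints lying (strictly) on one side of chord `i` -/
def sideCount (D : ChordDiagram n) (i : Fin n) : ℕ :=
  (univ.filter fun x => D.StrictlyBetween i x).card

/-- a chord is odd if it interlinks an odd number of other chords -/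
def OddChord (D : ChordDiagram n) (i : Fin n) : Prop := Odd (D.interlinkCount i)

instance (D : ChordDiagram n) (i : Fin n) : Decidable (D.OddChord i) :=
  inferInstanceAs (Decidable (Odd _))

/-- The label `N(a)` of the arc whose terminal point is `a`: the sum of the signs of
all chords whose over endpoint is met strictly before their under endpoint when
traversing the circle once in the positive direction starting inside this arc. -/
def arcLabel (D : ChordDiagram n) (a : Fin (2 * n)) : ℤ :=
  ∑ i ∈ univ.filter fun i => relpos a (D.overEnd i) < relpos a (D.under i), D.sign i

/-- The value `N(c)` of a chord: for a positive chord, the difference `x - y` of the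
arc labels just before `c⁺` and just before `c⁻`; for a negative chord, the difference
`z - w` of the arc labels just after `c⁺` and just after `c⁻` (the label just after an
over endpoint is the label just before it minus the sign, and the label just after an
under endpoint is the label just before it plus the sign). -/
def chordVal (D : ChordDiagram n) (i : Fin n) : ℤ :=
  if D.sign i = 1 then D.arcLabel (D.overEnd i) - D.arcLabel (D.under i)
  else (D.arcLabel (D.overEnd i) - D.sign i) - (D.arcLabel (D.under i) + D.sign i)

/-- the odd writhe `J(K) = Σ_{c odd} w(c)` -/
def oddWrithe (D : ChordDiagram n) : ℤ :=
  ∑ i ∈ univ.filter fun i => D.OddChord i, D.sign i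

/-- the odd writhe polynomial `f_K(t) = Σ_{c odd} w(c) · t^{N(c)} ∈ ℤ[t,t⁻¹]` -/
noncomputable def owp (D : ChordDiagram n) : LaurentPolynomial ℤ :=
  ∑ i ∈ univ.filter fun i => D.OddChord i, C (D.sign i) * T (D.chordVal i)

/-- evaluation of the odd writhe polynomial at a rational number `x`:
`Σ_{c odd} w(c) · x^{N(c)}` -/
def owpEval (D : ChordDiagram n) (x : ℚ) : ℚ :=
  ∑ i ∈ univ.filter fun i => D.OddChord i, (D.sign i : ℚ) * x ^ D.chordVal i

/-- the coefficient of `t^k` in a Laurent polynomial -/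
def coeffOf (f : LaurentPolynomial ℤ) (k : ℤ) : ℤ := (AddMonoidAlgebra.coeff f : ℤ →₀ ℤ) k

/-- the degree `Deg f = max { |i| : coefficient of tⁱ in f is nonzero }` -/
def owpDeg (f : LaurentPolynomial ℤ) : ℕ := (AddMonoidAlgebra.coeff f : ℤ →₀ ℤ).support.sup fun k => k.natAbs

/-- reversing the orientation of the knot: the cyclic order of the endpoints is
reversed, while signs and over/under data of the crossings are preserved -/
def reverse (D : ChordDiagram n) : ChordDiagram n where
  ep := D.ep.trans Fin.revPerm
  sign := D.sign
  sign_unit := D.sign_unit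

/-- the mirror image: every crossing is switched, so every chord's over and under
endpoints are exchanged and its sign is negated -/
def mirror (D : ChordDiagram n) : ChordDiagram n where
  ep := (Equiv.prodCongr (Equiv.refl (Fin n))
      ⟨fun b => !b, fun b => !b, Bool.not_not, Bool.not_not⟩).trans D.ep
  sign := fun i => -D.sign i
  sign_unit := fun i => (D.sign_unit i).elim
    (fun h => Or.inr (show -D.sign i = -1 by rw [h]))
    (fun h => Or.inl (show -D.sign i = 1 by rw [h]; ring))

/-! ### Planarity via the Euler characteristic of the carrier surface

The diagram determines a 4-valent graph (vertices = chords, edges = the `2*n` arcs of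
the circle) together with a rotation system at each vertex, coming from the structure
of a transversal crossing: for a positive crossing the counterclockwise order of the
four ends is (over-out, under-out, over-in, under-in), for a negative crossing it is
(over-out, under-in, over-in, under-out).  The diagram is realizable by a classical
(planar) knot diagram iff the resulting closed oriented carrier surface is a sphere,
i.e. iff `V - E + F = n - 2n + F = 2`.

Darts are encoded as pairs `(p, io) : Fin (2*n) × Bool`, meaning the end of an arc
at the vertex through the circle point `p`, with `io = true` for the outgoing arc
(from `p` to `p+1`) and `io = false` for the incoming arc (from `p-1` to `p`). -/

/-- the other endpoint of the chord through a given endpoint -/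
def otherEnd (D : ChordDiagram n) (p : Fin (2 * n)) : Fin (2 * n) :=
  D.ep ((D.ep.symm p).1, !(D.ep.symm p).2)

lemma otherEnd_otherEnd (D : ChordDiagram n) (p : Fin (2 * n)) :
    D.otherEnd (D.otherEnd p) = p := by
  simp [otherEnd]

/-- whether the rotation at the vertex toggles the in/out marker when passing from
the end at `p` to the end at the other endpoint of its chord -/
def tog (D : ChordDiagram n) (p : Fin (2 * n)) : Bool :=
  if D.sign (D.ep.symm p).1 = 1 then !(D.ep.symm p).2 else (D.ep.symm p).2

/-- the vertex rotation permutation on darts -/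
def vertexPerm (D : ChordDiagram n) : Equiv.Perm (Fin (2 * n) × Bool) :=
  Equiv.trans
    ⟨fun x => (x.1, xor x.2 (D.tog x.1)), fun x => (x.1, xor x.2 (D.tog x.1)),
      fun x => by simp [Bool.xor_assoc], fun x => by simp [Bool.xor_assoc]⟩
    ⟨fun x => (D.otherEnd x.1, x.2), fun x => (D.otherEnd x.1, x.2),
      fun x => by simp [otherEnd_otherEnd], fun x => by simp [otherEnd_otherEnd]⟩

/-- the edge involution on darts, matching the two ends of each arc -/
def arcPerm (D : ChordDiagram n) : Equiv.Perm (Fin (2 * n) × Bool) :=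
  ⟨fun x => if x.2 then (finRotate (2 * n) x.1, false) else ((finRotate (2 * n)).symm x.1, true),
   fun x => if x.2 then (finRotate (2 * n) x.1, false) else ((finRotate (2 * n)).symm x.1, true),
   fun x => by rcases x with ⟨p, _ | _⟩ <;> simp only [Bool.false_eq_true, ite_false, ite_true, Equiv.apply_symm_apply, Equiv.symm_apply_apply],
   fun x => by rcases x with ⟨p, _ | _⟩ <;> simp only [Bool.false_eq_true, ite_false, ite_true, Equiv.apply_symm_apply, Equiv.symm_apply_apply]⟩

/-- the face permutation on darts -/
def facePerm (D : ChordDiagram n) : Equiv.Perm (Fin (2 * n) × Bool) :=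
  (D.arcPerm).trans D.vertexPerm

/-- the number of faces: the number of orbits of the face permutation -/
noncomputable def faceCount (D : ChordDiagram n) : ℕ :=
  Nat.card (MulAction.orbitRel.Quotient (Subgroup.zpowers D.facePerm) (Fin (2 * n) × Bool))

/-- the chord diagram arises from a classical (planar) knot diagram: the carrier
surface has Euler characteristic `V - E + F = n - 2n + faceCount = 2` -/
def PlanarRealizable (D : ChordDiagram n) : Prop := D.faceCount = n + 2

end ChordDiagram


/-! Inserting a chord `i₀` that interlinks no other chord, with the old endpoints relabelled
by an order embedding, preserves the cyclic order of the old endpoints, hence which old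
chords interlink; so parities are unchanged, and `i₀` itself is even. The sign of `i₀` enters
the label of an arc according to the side of `i₀` the arc lies on; as `i₀` does not separate
the two endpoints of any old chord, it shifts both labels entering `N(c)` by the same
amount, and the difference `N(c)` is unchanged. -/

namespace ChordDiagram

variable {n : ℕ}

lemma relpos_eq (b x : Fin (2 * n)) :
    relpos b x = if b.val ≤ x.val then x.val - b.val else x.val + 2 * n - b.val := by
  have hx := x.isLt
  unfold relpos
  split_ifs with h
  · rw [show x.val + 2 * n - b.val = (x.val - b.val) + 1 * (2 * n) by omega,
      Nat.add_mul_mod_self_right, Nat.mod_eq_of_lt (by omega)]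
  · rw [Nat.mod_eq_of_lt (by omega)]

lemma relpos_pos_iff (b x : Fin (2 * n)) : 0 < relpos b x ↔ x ≠ b := by
  have hx := x.isLt
  rw [relpos_eq, Ne, Fin.ext_iff]
  split_ifs <;> omega

lemma relpos_lt_relpos_iff (b x y : Fin (2 * n)) :
    relpos b x < relpos b y ↔
      (b.val ≤ x.val ∧ b.val ≤ y.val ∧ x.val < y.val) ∨ (b.val ≤ x.val ∧ y.val < b.val) ∨
        (x.val < b.val ∧ y.val < b.val ∧ x.val < y.val) := by
  have hx := x.isLt; have hy := y.isLt
  rw [relpos_eq, relpos_eq]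
  split_ifs <;> omega

/-- `relpos b x < relpos b y` says that `b, x, y` are in positive cyclic order, which an
order embedding preserves. -/
lemma relpos_lt_relpos_comp_iff {m : ℕ} {φ : Fin (2 * n) → Fin (2 * m)} (hφ : StrictMono φ)
    (b x y : Fin (2 * n)) :
    relpos (φ b) (φ x) < relpos (φ b) (φ y) ↔ relpos b x < relpos b y := by
  have hle : ∀ u v, (φ u).val ≤ (φ v).val ↔ u.val ≤ v.val := fun u v => hφ.le_iff_le
  have hlt : ∀ u v, (φ u).val < (φ v).val ↔ u.val < v.val := fun u v => hφ.lt_iff_lt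
  simp only [relpos_lt_relpos_iff, hle, hlt]

lemma strictlyBetween_iff (D : ChordDiagram n) (i : Fin n) (x : Fin (2 * n)) :
    D.StrictlyBetween i x ↔ x.val ≠ (D.overEnd i).val ∧
      ((D.overEnd i).val ≤ x.val ∧ (D.overEnd i).val ≤ (D.under i).val ∧ x.val < (D.under i).val ∨
        (D.overEnd i).val ≤ x.val ∧ (D.under i).val < (D.overEnd i).val ∨
        x.val < (D.overEnd i).val ∧ (D.under i).val < (D.overEnd i).val ∧
          x.val < (D.under i).val) := by
  rw [StrictlyBetween, relpos_pos_iff, relpos_lt_relpos_iff, Ne, Fin.ext_iff]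

lemma val_ep_ne_val_ep (D : ChordDiagram n) {p q : Fin n × Bool} (h : p ≠ q) :
    (D.ep p).val ≠ (D.ep q).val :=
  fun hv => h (D.ep.injective (Fin.ext hv))

lemma Interlinks.symm {D : ChordDiagram n} {i j : Fin n} (h : D.Interlinks i j) :
    D.Interlinks j i := by
  obtain ⟨hne, hx⟩ := h
  refine ⟨hne.symm, ?_⟩
  rw [strictlyBetween_iff, strictlyBetween_iff] at hx ⊢
  have hi : (D.overEnd i).val ≠ (D.under i).val := D.val_ep_ne_val_ep (by simp)
  have hj : (D.overEnd j).val ≠ (D.under j).val := D.val_ep_ne_val_ep (by simp)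
  have h1 : (D.overEnd i).val ≠ (D.overEnd j).val := D.val_ep_ne_val_ep (by simp [hne])
  have h2 : (D.overEnd i).val ≠ (D.under j).val := D.val_ep_ne_val_ep (by simp [hne])
  have h3 : (D.under i).val ≠ (D.overEnd j).val := D.val_ep_ne_val_ep (by simp [hne])
  have h4 : (D.under i).val ≠ (D.under j).val := D.val_ep_ne_val_ep (by simp [hne])
  unfold Xor at hx ⊢
  omega

/-- A chord `i` not interlinking `j` contributes to the arc labels at both endpoints of `j`
alike: both endpoints lie on the same side of `i`. -/
lemma relpos_lt_relpos_overEnd_iff_under {D : ChordDiagram n} {i j : Fin n} (hij : i ≠ j)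
    (h : ¬ D.Interlinks i j) :
    relpos (D.overEnd j) (D.overEnd i) < relpos (D.overEnd j) (D.under i) ↔
      relpos (D.under j) (D.overEnd i) < relpos (D.under j) (D.under i) := by
  have hside : D.StrictlyBetween i (D.overEnd j) ↔ D.StrictlyBetween i (D.under j) := by
    unfold Interlinks Xor at h
    tauto
  rw [strictlyBetween_iff, strictlyBetween_iff] at hside
  rw [relpos_lt_relpos_iff, relpos_lt_relpos_iff]
  have hi : (D.overEnd i).val ≠ (D.under i).val := D.val_ep_ne_val_ep (by simp)
  have h1 : (D.overEnd j).val ≠ (D.overEnd i).val := D.val_ep_ne_val_ep (by simp [hij.symm])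
  have h2 : (D.overEnd j).val ≠ (D.under i).val := D.val_ep_ne_val_ep (by simp [hij.symm])
  have h3 : (D.under j).val ≠ (D.overEnd i).val := D.val_ep_ne_val_ep (by simp [hij.symm])
  have h4 : (D.under j).val ≠ (D.under i).val := D.val_ep_ne_val_ep (by simp [hij.symm])
  omega

lemma not_oddChord_of_forall_not_interlinks {D : ChordDiagram n} {i : Fin n}
    (h : ∀ j, ¬ D.Interlinks i j) : ¬ D.OddChord i := by
  rw [OddChord, interlinkCount, filter_false_of_mem fun j _ => h j]
  simp

section Insertion

variable {D : ChordDiagram n} {D' : ChordDiagram (n + 1)} {i₀ : Fin (n + 1)}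
  {φ : Fin (2 * n) → Fin (2 * (n + 1))}

lemma overEnd_succAbove (hep : ∀ j b, D'.ep (i₀.succAbove j, b) = φ (D.ep (j, b))) (j : Fin n) :
    D'.overEnd (i₀.succAbove j) = φ (D.overEnd j) :=
  hep j true

lemma under_succAbove (hep : ∀ j b, D'.ep (i₀.succAbove j, b) = φ (D.ep (j, b))) (j : Fin n) :
    D'.under (i₀.succAbove j) = φ (D.under j) :=
  hep j false

lemma strictlyBetween_succAbove_iff (hφ : StrictMono φ)
    (hep : ∀ j b, D'.ep (i₀.succAbove j, b) = φ (D.ep (j, b))) (j : Fin n) (x : Fin (2 * n)) :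
    D'.StrictlyBetween (i₀.succAbove j) (φ x) ↔ D.StrictlyBetween j x := by
  simp only [StrictlyBetween, overEnd_succAbove hep, under_succAbove hep, relpos_pos_iff,
    hφ.injective.ne_iff, relpos_lt_relpos_comp_iff hφ]

lemma interlinks_succAbove_iff (hφ : StrictMono φ)
    (hep : ∀ j b, D'.ep (i₀.succAbove j, b) = φ (D.ep (j, b))) (j k : Fin n) :
    D'.Interlinks (i₀.succAbove j) (i₀.succAbove k) ↔ D.Interlinks j k := by
  simp only [Interlinks, Fin.succAbove_right_injective.ne_iff]
  rw [overEnd_succAbove hep, under_succAbove hep, strictlyBetween_succAbove_iff hφ hep,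
    strictlyBetween_succAbove_iff hφ hep]

lemma oddChord_succAbove_iff (hφ : StrictMono φ)
    (hep : ∀ j b, D'.ep (i₀.succAbove j, b) = φ (D.ep (j, b)))
    (hiso : ∀ j, ¬ D'.Interlinks i₀ (i₀.succAbove j)) (j : Fin n) :
    D'.OddChord (i₀.succAbove j) ↔ D.OddChord j := by
  have hcount : D'.interlinkCount (i₀.succAbove j) = D.interlinkCount j := by
    rw [interlinkCount, interlinkCount, card_filter, card_filter, Fin.sum_univ_succAbove _ i₀,
      if_neg fun h => hiso j h.symm, zero_add]
    exact sum_congr rfl fun k _ => if_congr (interlinks_succAbove_iff hφ hep j k) rfl rfl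
  rw [OddChord, OddChord, hcount]

lemma arcLabel_map (hφ : StrictMono φ)
    (hep : ∀ j b, D'.ep (i₀.succAbove j, b) = φ (D.ep (j, b)))
    (hsign : ∀ j, D'.sign (i₀.succAbove j) = D.sign j) (a : Fin (2 * n)) :
    D'.arcLabel (φ a) =
      (if relpos (φ a) (D'.overEnd i₀) < relpos (φ a) (D'.under i₀) then D'.sign i₀ else 0) +
        D.arcLabel a := by
  rw [arcLabel, arcLabel, sum_filter, sum_filter, Fin.sum_univ_succAbove _ i₀]
  congr 1
  refine sum_congr rfl fun j _ => ?_
  rw [overEnd_succAbove hep, under_succAbove hep, hsign]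
  exact if_congr (relpos_lt_relpos_comp_iff hφ _ _ _) rfl rfl

lemma chordVal_succAbove (hφ : StrictMono φ)
    (hep : ∀ j b, D'.ep (i₀.succAbove j, b) = φ (D.ep (j, b)))
    (hsign : ∀ j, D'.sign (i₀.succAbove j) = D.sign j)
    (hiso : ∀ j, ¬ D'.Interlinks i₀ (i₀.succAbove j)) (j : Fin n) :
    D'.chordVal (i₀.succAbove j) = D.chordVal j := by
  have hside := relpos_lt_relpos_overEnd_iff_under (Fin.succAbove_ne i₀ j).symm (hiso j)
  rw [overEnd_succAbove hep, under_succAbove hep] at hside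
  rw [chordVal, chordVal, hsign, overEnd_succAbove hep, under_succAbove hep,
    arcLabel_map hφ hep hsign, arcLabel_map hφ hep hsign, if_congr hside rfl rfl]
  split_ifs <;> ring

end Insertion

end ChordDiagram


open ChordDiagram

/-- the odd writhe polynomial is invariant under the Gauss-diagram
Reidemeister move Ω1: removing an isolated chord `i₀` (one interlinking no other
chord) from `D'` yields `D` (via the strictly monotone relabelling `φ` of the
remaining endpoints) and the polynomial is unchanged. -/
theorem stmt_5 {n : ℕ} (D : ChordDiagram n) (D' : ChordDiagram (n + 1))
    (i₀ : Fin (n + 1)) (φ : Fin (2 * n) → Fin (2 * (n + 1))) (hφ : StrictMono φ)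
    (hep : ∀ (j : Fin n) (b : Bool), D'.ep (i₀.succAbove j, b) = φ (D.ep (j, b)))
    (hsign : ∀ j : Fin n, D'.sign (i₀.succAbove j) = D.sign j)
    (hiso : ∀ j : Fin (n + 1), j ≠ i₀ → ¬ D'.Interlinks i₀ j) :
    D'.owp = D.owp := by
  have hiso' : ∀ j, ¬ D'.Interlinks i₀ (i₀.succAbove j) := fun j =>
    hiso _ (Fin.succAbove_ne i₀ j)
  have hi₀ : ¬ D'.OddChord i₀ := not_oddChord_of_forall_not_interlinks fun j hj =>
    hiso j (fun h => hj.1 h.symm) hj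
  rw [owp, owp, sum_filter, sum_filter, Fin.sum_univ_succAbove _ i₀, if_neg hi₀, zero_add]
  refine sum_congr rfl fun j _ => ?_
  rw [hsign, chordVal_succAbove hφ hep hsign hiso']
  exact if_congr (oddChord_succAbove_iff hφ hep hiso' j) rfl rfl
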